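/- For every pair of adjacent vertices u, v of G with √τ < d_v ≤ ℓ and √τ < d_u ≤ ℓ, and every i ∈ {1,…,k}: Pr[u ∈ C and r_u ∈ I_{u,i} and v ∈ C_i⁺] ≤ 2·e^{−ℓ·a_i} · Pr[r_u ∈ I_{u,i} and v ∈ C_i⁺]. -/

import Mathlib

open MeasureTheory Real
open scoped ENNReal



/-- `log* x`: the least `n` such that the `n`-fold iterated natural logarithm of `x` is `≤ 1`. -/
noncomputable def logStar (x : ℝ) : ℕ := sInf {n : ℕ | Real.log^[n] x ≤ 1}

/-- `τ = 1 / (log log log Δ)`. -/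
noncomputable def tauOf (Δ : ℕ) : ℝ := 1 / Real.log (Real.log (Real.log Δ))

/-- `ℓ = (log*(1/τ))^{1/100}`. -/
noncomputable def ellOf (Δ : ℕ) : ℝ := (logStar (1 / tauOf Δ) : ℝ) ^ ((1 : ℝ) / 100)

/-- `β = log*(1/τ) / ℓ`. -/
noncomputable def betaOf (Δ : ℕ) : ℝ := (logStar (1 / tauOf Δ) : ℝ) / ellOf Δ

/-- `k = ⌊log*(1/τ) / 100⌋`. -/
noncomputable def kOf (Δ : ℕ) : ℕ := logStar (1 / tauOf Δ) / 100

/-- Auxiliary sequence: `aw 0 = 10β`, `aw (n+1) = exp (ℓ · aw n) / (16ℓ)`. -/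
noncomputable def aw (Δ : ℕ) : ℕ → ℝ
  | 0 => 10 * betaOf Δ
  | n + 1 => Real.exp (ellOf Δ * aw Δ n) / (16 * ellOf Δ)

/-- Paper-indexed sequence `a_i`: `awP Δ 1 = 10β` and `awP Δ (i+1) = exp (ℓ·awP Δ i)/(16ℓ)`
for `i ≥ 1`. -/
noncomputable def awP (Δ i : ℕ) : ℝ := aw Δ (i - 1)

/-- `d_v = Σ_{u ∼ v} p_u`, the total desire in the neighborhood of `v`. -/
noncomputable def dW {V : Type*} [Fintype V] (G : SimpleGraph V) [DecidableRel G.Adj]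
    (p : V → ℝ) (v : V) : ℝ :=
  ∑ u ∈ G.neighborFinset v, p u

/-- `v ∈ C⁻`: `d_v ≤ √τ` and `r_v ≤ β·p_v`. -/
def CminusMem {V : Type*} [Fintype V] (G : SimpleGraph V) [DecidableRel G.Adj]
    (Δ : ℕ) (p r : V → ℝ) (v : V) : Prop :=
  dW G p v ≤ Real.sqrt (tauOf Δ) ∧ r v ≤ betaOf Δ * p v

/-- `v ∈ C_i⁺`: `√τ < d_v ≤ ℓ`, `r_v ∈ I_{v,i} = (a_i p_v, a_{i+1} p_v]`, and
`r_u ∈ J_{v,u,i} = (ℓ a_i p_u / d_v, 1]` for every neighbor `u` of `v`. -/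
def CplusMem {V : Type*} [Fintype V] (G : SimpleGraph V) [DecidableRel G.Adj]
    (Δ : ℕ) (p r : V → ℝ) (i : ℕ) (v : V) : Prop :=
  Real.sqrt (tauOf Δ) < dW G p v ∧ dW G p v ≤ ellOf Δ ∧
  r v ∈ Set.Ioc (awP Δ i * p v) (awP Δ (i + 1) * p v) ∧
  ∀ u, G.Adj v u → r u ∈ Set.Ioc (ellOf Δ * (awP Δ i * p u) / dW G p v) 1

/-- `v ∈ C = C⁻ ∪ C₁⁺ ∪ … ∪ C_k⁺`. -/
def CMem {V : Type*} [Fintype V] (G : SimpleGraph V) [DecidableRel G.Adj]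
    (Δ : ℕ) (p r : V → ℝ) (v : V) : Prop :=
  CminusMem G Δ p r v ∨ ∃ i ∈ Finset.Icc 1 (kOf Δ), CplusMem G Δ p r i v

/-- `v ∈ 𝓘`: `v` is a candidate and no neighbor of `v` is a candidate. -/
def ISMem {V : Type*} [Fintype V] (G : SimpleGraph V) [DecidableRel G.Adj]
    (Δ : ℕ) (p r : V → ℝ) (v : V) : Prop :=
  CMem G Δ p r v ∧ ∀ u, G.Adj v u → ¬ CMem G Δ p r u

/-- The ranks are independent and uniform on `[0,1]`: product Lebesgue measure on `[0,1]^V`. -/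
noncomputable def rankMeasure (V : Type*) [Fintype V] : Measure (V → ℝ) :=
  Measure.pi fun _ => (volume : Measure ℝ).restrict (Set.Icc 0 1)


private lemma exp_ge_sq {t : ℝ} (ht : 0 ≤ t) : t ^ 2 / 4 ≤ Real.exp t := by
  have h := Real.add_one_le_exp (t / 2)
  have h2 : (t / 2) ^ 2 ≤ (Real.exp (t / 2)) ^ 2 :=
    pow_le_pow_left₀ (by positivity) (by linarith) 2
  have h3 : Real.exp (t / 2) ^ 2 = Real.exp t := by
    rw [← Real.exp_nat_mul]; congr 1; push_cast; ring
  nlinarith [h2, h3]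

private lemma exp_ge_pow6 {t : ℝ} (ht : 0 ≤ t) : (t / 6) ^ 6 ≤ Real.exp t := by
  have h := Real.add_one_le_exp (t / 6)
  have h2 : (t / 6) ^ 6 ≤ (Real.exp (t / 6)) ^ 6 :=
    pow_le_pow_left₀ (by positivity) (by linarith) 6
  have h3 : Real.exp (t / 6) ^ 6 = Real.exp t := by
    rw [← Real.exp_nat_mul]; congr 1; push_cast; ring
  linarith [h2, h3.le]

private lemma le_exp_iter (n : ℕ) (t : ℝ) : t ≤ Real.exp^[n] t := by
  induction n with
  | zero => simp
  | succ n ih =>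
    rw [Function.iterate_succ_apply']
    exact le_trans (le_trans ih (by linarith [Real.add_one_le_exp (Real.exp^[n] t)])) le_rfl

private lemma exp_iter_mono (n : ℕ) : Monotone (Real.exp^[n]) :=
  Real.exp_monotone.iterate n

private lemma exp_iter_le_exp_iter {n m : ℕ} (h : n ≤ m) (t : ℝ) :
    Real.exp^[n] t ≤ Real.exp^[m] t := by
  obtain ⟨d, rfl⟩ := Nat.exists_eq_add_of_le h
  rw [Function.iterate_add_apply]
  exact exp_iter_mono n (le_exp_iter d t)

private lemma logStar_set_nonempty (x : ℝ) : {n : ℕ | Real.log^[n] x ≤ 1}.Nonempty := by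
  suffices h : ∀ N : ℕ, ∀ y : ℝ, y ≤ N → ∃ n, Real.log^[n] y ≤ 1 by
    obtain ⟨n, hn⟩ := h (⌈x⌉₊ + 1) x (by
      rcases le_or_gt x 0 with h0 | h0
      · exact h0.trans (by positivity)
      · push_cast; linarith [Nat.le_ceil x])
    exact ⟨n, hn⟩
  intro N
  induction N with
  | zero => intro y hy; exact ⟨0, by simpa using hy.trans (by norm_num)⟩
  | succ N ih =>
    intro y hy
    rcases le_or_gt y 1 with h1 | h1
    · exact ⟨0, by simpa using h1⟩
    · have hlog : Real.log y ≤ N := by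
        have := Real.log_le_sub_one_of_pos (by linarith : (0:ℝ) < y)
        push_cast at hy ⊢; linarith
      obtain ⟨n, hn⟩ := ih (Real.log y) hlog
      exact ⟨n + 1, by rwa [Function.iterate_succ_apply]⟩

private lemma exp_iter_one_lt {x : ℝ} (m : ℕ) (h : ∀ j ≤ m, 1 < Real.log^[j] x) :
    Real.exp^[m] 1 < x := by
  induction m generalizing x with
  | zero => simpa using h 0 le_rfl
  | succ m ih =>
    have hx1 : 1 < x := by simpa using h 0 (Nat.zero_le _)
    have hlog : Real.exp^[m] 1 < Real.log x := by
      apply ih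
      intro j hj
      have := h (j + 1) (by omega)
      rwa [Function.iterate_succ_apply] at this
    rw [Function.iterate_succ_apply']
    calc Real.exp (Real.exp^[m] 1) < Real.exp (Real.log x) := Real.exp_lt_exp.mpr hlog
    _ = x := Real.exp_log (by linarith)

private lemma exp_le_exp_iter_one (m : ℕ) : Real.exp m ≤ Real.exp^[m] 1 := by
  induction m with
  | zero => simp
  | succ m ih =>
    rw [Function.iterate_succ_apply']
    have h1 : (m : ℝ) + 1 ≤ Real.exp m := Real.add_one_le_exp m
    push_cast
    calc Real.exp ((m : ℝ) + 1) ≤ Real.exp (Real.exp m) := Real.exp_le_exp.mpr h1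
    _ ≤ Real.exp (Real.exp^[m] 1) := Real.exp_le_exp.mpr ih

private lemma exp_chain (j : ℕ) : ∀ {x y : ℝ}, 2 ≤ x → Real.exp 1 * x ^ 2 ≤ y →
    Real.exp 1 * (Real.exp^[j] x) ^ 2 ≤ Real.exp^[j] y := by
  induction j with
  | zero => intro x y _ h; simpa using h
  | succ j ih =>
    intro x y hx hxy
    have hXj : 2 ≤ Real.exp^[j] x := le_trans hx (le_exp_iter j x)
    have hIH := ih hx hxy
    rw [Function.iterate_succ_apply', Function.iterate_succ_apply']
    have key : 2 * Real.exp^[j] x + 1 ≤ Real.exp 1 * (Real.exp^[j] x) ^ 2 := by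
      nlinarith [Real.exp_one_gt_d9, sq_nonneg (Real.exp^[j] x - 1)]
    calc Real.exp 1 * Real.exp (Real.exp^[j] x) ^ 2
        = Real.exp (2 * Real.exp^[j] x + 1) := by
          rw [← Real.exp_nat_mul]; push_cast
          rw [← Real.exp_add]; ring_nf
    _ ≤ Real.exp (Real.exp 1 * (Real.exp^[j] x) ^ 2) := Real.exp_le_exp.mpr key
    _ ≤ Real.exp (Real.exp^[j] y) := Real.exp_le_exp.mpr hIH
private lemma key_numeric (Δ : ℕ) (hτ0 : 0 < tauOf Δ) (hτ1 : tauOf Δ ≤ 1 / 2)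
    (hs : 100 ≤ logStar (1 / tauOf Δ)) :
    Real.exp 1 * (Real.exp^[kOf Δ - 1] (10 * (logStar (1 / tauOf Δ) : ℝ))) ^ 2
      ≤ 1 / tauOf Δ := by
  set s := logStar (1 / tauOf Δ) with hs_def
  set k := kOf Δ with hk_def
  have hks : k ≤ s := Nat.div_le_self s 100
  have hk1 : 1 ≤ k := by rw [hk_def]; unfold kOf; rw [← hs_def]; omega
  have hx2 : (2 : ℝ) ≤ 1 / tauOf Δ := by
    rw [le_div_iff₀ hτ0]; linarith
  -- all iterates below s are > 1
  have hiter : ∀ j ≤ s - 1, 1 < Real.log^[j] (1 / tauOf Δ) := by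
    intro j hj
    have hjs : j < s := by omega
    have := Nat.notMem_of_lt_sInf (s := {n : ℕ | Real.log^[n] (1 / tauOf Δ) ≤ 1})
      (by rw [hs_def] at hjs; exact hjs)
    simpa [Set.mem_setOf_eq, not_le] using this
  have H : Real.exp^[s - 1] 1 < 1 / tauOf Δ := exp_iter_one_lt (s - 1) hiter
  -- decompose s - 1 = (k-1) + (s-k)
  have hdecomp : Real.exp^[s - 1] (1 : ℝ) = Real.exp^[k - 1] (Real.exp^[s - k] 1) := by
    rw [← Function.iterate_add_apply]
    congr 1
    omega
  -- base: exp 1 * (10 s)^2 ≤ exp^[s-k] 1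
  have hmk : (99 : ℝ) ≤ ((s - k : ℕ) : ℝ) := by
    have : 100 * k ≤ s := by rw [hk_def]; unfold kOf; rw [← hs_def]; omega
    have h2 : k + 99 ≤ s := by omega
    push_cast [Nat.cast_sub hks]
    have : (k:ℝ) + 99 ≤ s := by exact_mod_cast h2
    linarith
  have hsle : (s : ℝ) ≤ 2 * ((s - k : ℕ) : ℝ) := by
    have h100 : 100 * k ≤ s := by rw [hk_def]; unfold kOf; rw [← hs_def]; omega
    have : (100 : ℝ) * k ≤ s := by exact_mod_cast h100
    rw [Nat.cast_sub hks]
    linarith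
  have hbase : Real.exp 1 * (10 * (s : ℝ)) ^ 2 ≤ Real.exp^[s - k] 1 := by
    set m : ℝ := ((s - k : ℕ) : ℝ) with hm_def
    have h1 : Real.exp m ≤ Real.exp^[s - k] 1 := exp_le_exp_iter_one (s - k)
    have h2 : Real.exp 1 * Real.exp (m - 1) = Real.exp m := by
      rw [← Real.exp_add]; ring_nf
    have h3 : ((m - 1) / 6) ^ 6 ≤ Real.exp (m - 1) := exp_ge_pow6 (by linarith)
    have h4 : (10 * (s : ℝ)) ^ 2 ≤ ((m - 1) / 6) ^ 6 := by
      have ht : (98 : ℝ) ≤ m - 1 := by linarith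
      have hs2 : (s : ℝ) ≤ 2 * m := hsle
      have hp4 : (98 : ℝ) ^ 4 ≤ (m - 1) ^ 4 := pow_le_pow_left₀ (by norm_num : (0:ℝ) ≤ 98) ht 4
      have hsq : (s : ℝ) ^ 2 ≤ 4 * m ^ 2 := by nlinarith [(Nat.cast_nonneg s : (0:ℝ) ≤ s)]
      have hmm : m ^ 2 ≤ 2 * (m - 1) ^ 2 := by nlinarith
      have h6 : (m - 1) ^ 6 = (m - 1) ^ 4 * (m - 1) ^ 2 := by ring
      have hnn : (0:ℝ) ≤ (m - 1) ^ 2 := sq_nonneg _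
      calc (10 * (s : ℝ)) ^ 2 = 100 * s ^ 2 := by ring
      _ ≤ 100 * (4 * m ^ 2) := by linarith
      _ ≤ 800 * (m - 1) ^ 2 := by linarith
      _ ≤ (98 : ℝ) ^ 4 / 46656 * (m - 1) ^ 2 := by nlinarith
      _ ≤ (m - 1) ^ 4 / 46656 * (m - 1) ^ 2 := by
          apply mul_le_mul_of_nonneg_right _ hnn
          linarith
      _ = ((m - 1) / 6) ^ 6 := by ring
    calc Real.exp 1 * (10 * (s : ℝ)) ^ 2 ≤ Real.exp 1 * Real.exp (m - 1) := by
          have := Real.exp_pos 1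
          nlinarith [h3, h4]
    _ = Real.exp m := h2
    _ ≤ Real.exp^[s - k] 1 := h1
  have hchain := exp_chain (k - 1) (x := 10 * (s : ℝ)) (y := Real.exp^[s - k] 1)
    (by have : (100:ℝ) ≤ s := by exact_mod_cast hs
        linarith) hbase
  rw [← hdecomp] at hchain
  exact hchain.trans H.le
private lemma one_le_ell (Δ : ℕ) (hs : 1 ≤ logStar (1 / tauOf Δ)) : 1 ≤ ellOf Δ :=
  Real.one_le_rpow (by exact_mod_cast hs) (by norm_num)

private lemma ell_mul_beta (Δ : ℕ) (hs : 1 ≤ logStar (1 / tauOf Δ)) :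
    ellOf Δ * betaOf Δ = (logStar (1 / tauOf Δ) : ℝ) := by
  have h := one_le_ell Δ hs
  unfold betaOf
  field_simp

private lemma ell_aw_ge (Δ : ℕ) (hs : 100 ≤ logStar (1 / tauOf Δ)) (n : ℕ) :
    10 * (logStar (1 / tauOf Δ) : ℝ) ≤ ellOf Δ * aw Δ n := by
  have hl := one_le_ell Δ (by omega)
  have hsR : (100 : ℝ) ≤ (logStar (1 / tauOf Δ) : ℝ) := by exact_mod_cast hs
  induction n with
  | zero =>
    have : ellOf Δ * aw Δ 0 = 10 * (ellOf Δ * betaOf Δ) := by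
      show ellOf Δ * (10 * betaOf Δ) = _; ring
    rw [this, ell_mul_beta Δ (by omega)]
  | succ n ih =>
    have hx0 : (1000 : ℝ) ≤ ellOf Δ * aw Δ n := by linarith
    have hsq := exp_ge_sq (t := ellOf Δ * aw Δ n) (by linarith)
    have heq : ellOf Δ * aw Δ (n + 1) = Real.exp (ellOf Δ * aw Δ n) / 16 := by
      show ellOf Δ * (Real.exp (ellOf Δ * aw Δ n) / (16 * ellOf Δ)) = _
      field_simp
    rw [heq]
    nlinarith

private lemma aw_pos (Δ : ℕ) (hs : 100 ≤ logStar (1 / tauOf Δ)) (n : ℕ) : 0 < aw Δ n := by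
  have hl := one_le_ell Δ (by omega)
  have hsR : (100 : ℝ) ≤ (logStar (1 / tauOf Δ) : ℝ) := by exact_mod_cast hs
  have h := ell_aw_ge Δ hs n
  nlinarith

private lemma aw_lt_succ (Δ : ℕ) (hs : 100 ≤ logStar (1 / tauOf Δ)) (n : ℕ) :
    aw Δ n < aw Δ (n + 1) := by
  have hl := one_le_ell Δ (by omega)
  have hsR : (100 : ℝ) ≤ (logStar (1 / tauOf Δ) : ℝ) := by exact_mod_cast hs
  have h1 := ell_aw_ge Δ hs n
  have hlpos : (0 : ℝ) < ellOf Δ := by linarith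
  rw [← mul_lt_mul_iff_right₀ hlpos]
  have heq : ellOf Δ * aw Δ (n + 1) = Real.exp (ellOf Δ * aw Δ n) / 16 := by
    show ellOf Δ * (Real.exp (ellOf Δ * aw Δ n) / (16 * ellOf Δ)) = _
    field_simp
  rw [heq]
  have hsq := exp_ge_sq (t := ellOf Δ * aw Δ n) (by nlinarith)
  nlinarith

private lemma ell_aw_le_iter (Δ : ℕ) (hs : 100 ≤ logStar (1 / tauOf Δ)) (n : ℕ) :
    ellOf Δ * aw Δ n ≤ Real.exp^[n] (10 * (logStar (1 / tauOf Δ) : ℝ)) := by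
  have hl := one_le_ell Δ (by omega)
  induction n with
  | zero =>
    have : ellOf Δ * aw Δ 0 = 10 * (ellOf Δ * betaOf Δ) := by
      show ellOf Δ * (10 * betaOf Δ) = _; ring
    rw [this, ell_mul_beta Δ (by omega)]
    simp
  | succ n ih =>
    have heq : ellOf Δ * aw Δ (n + 1) = Real.exp (ellOf Δ * aw Δ n) / 16 := by
      show ellOf Δ * (Real.exp (ellOf Δ * aw Δ n) / (16 * ellOf Δ)) = _
      field_simp
    rw [heq, Function.iterate_succ_apply']
    have h2 : Real.exp (ellOf Δ * aw Δ n) ≤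
        Real.exp (Real.exp^[n] (10 * (logStar (1 / tauOf Δ) : ℝ))) :=
      Real.exp_le_exp.mpr ih
    have := Real.exp_pos (ellOf Δ * aw Δ n)
    linarith
set_option maxHeartbeats 1000000 in
theorem stmt10 {V : Type*} [Fintype V] [DecidableEq V]
    (G : SimpleGraph V) [DecidableRel G.Adj] (Δ : ℕ)
    (hτ0 : 0 < tauOf Δ) (hτ1 : tauOf Δ ≤ 1 / 2)
    (hdeg : ∀ v, G.degree v ≤ Δ) (htri : G.CliqueFree 3)
    (p : V → ℝ) (hp : ∀ v, 0 ≤ p v ∧ p v ≤ tauOf Δ)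
    (u v : V) (huv : G.Adj u v)
    (hv1 : Real.sqrt (tauOf Δ) < dW G p v) (hv2 : dW G p v ≤ ellOf Δ)
    (hu1 : Real.sqrt (tauOf Δ) < dW G p u) (hu2 : dW G p u ≤ ellOf Δ)
    (i : ℕ) (hi : i ∈ Finset.Icc 1 (kOf Δ)) :
    rankMeasure V {r | CMem G Δ p r u ∧
        r u ∈ Set.Ioc (awP Δ i * p u) (awP Δ (i + 1) * p u) ∧ CplusMem G Δ p r i v} ≤
      ENNReal.ofReal (2 * Real.exp (-(ellOf Δ * awP Δ i))) *
        rankMeasure V {r | r u ∈ Set.Ioc (awP Δ i * p u) (awP Δ (i + 1) * p u) ∧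
          CplusMem G Δ p r i v} := by
  classical
  obtain ⟨hi1, hik⟩ := Finset.mem_Icc.mp hi
  have hk1 : 1 ≤ kOf Δ := le_trans hi1 hik
  have hs : 100 ≤ logStar (1 / tauOf Δ) := by unfold kOf at hk1; omega
  have hsR : (100 : ℝ) ≤ (logStar (1 / tauOf Δ) : ℝ) := by exact_mod_cast hs
  have hl : 1 ≤ ellOf Δ := one_le_ell Δ (by omega)
  have hlpos : 0 < ellOf Δ := by linarith
  have hτsq : 0 < Real.sqrt (tauOf Δ) := Real.sqrt_pos.mpr hτ0
  have hdu : 0 < dW G p u := lt_trans hτsq hu1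
  have hai_low : 10 * (logStar (1 / tauOf Δ) : ℝ) ≤ ellOf Δ * awP Δ i := ell_aw_ge Δ hs (i - 1)
  have hai_pos : 0 < awP Δ i := aw_pos Δ hs (i - 1)
  set X : ℝ := Real.exp^[kOf Δ - 1] (10 * (logStar (1 / tauOf Δ) : ℝ)) with hX_def
  have hXpos : 0 < X :=
    lt_of_lt_of_le (by linarith) (le_exp_iter (kOf Δ - 1) (10 * (logStar (1 / tauOf Δ) : ℝ)))
  have haiX : ellOf Δ * awP Δ i ≤ X :=
    le_trans (ell_aw_le_iter Δ hs (i - 1)) (exp_iter_le_exp_iter (by omega) _)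
  have hkey : Real.exp 1 * X ^ 2 ≤ 1 / tauOf Δ := key_numeric Δ hτ0 hτ1 hs
  -- X √τ ≤ log 2
  have hXsqτ : X * Real.sqrt (tauOf Δ) ≤ Real.log 2 := by
    have he : (1 : ℝ) ≤ Real.exp 1 * (Real.log 2) ^ 2 := by
      nlinarith [Real.log_two_gt_d9, Real.exp_one_gt_d9]
    have h2 : Real.exp 1 * X ^ 2 * tauOf Δ ≤ 1 := by
      rw [le_div_iff₀ hτ0] at hkey; linarith
    have h1 : X ^ 2 * tauOf Δ ≤ (Real.log 2) ^ 2 := by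
      nlinarith [Real.exp_pos 1, sq_nonneg X, mul_nonneg (sq_nonneg X) hτ0.le]
    have hss : (Real.sqrt (tauOf Δ)) ^ 2 = tauOf Δ := Real.sq_sqrt hτ0.le
    have hXs : (X * Real.sqrt (tauOf Δ)) ^ 2 = X ^ 2 * tauOf Δ := by rw [mul_pow, hss]
    have hlog2 : 0 < Real.log 2 := Real.log_pos (by norm_num)
    nlinarith [sq_nonneg (X * Real.sqrt (tauOf Δ) - Real.log 2),
      mul_pos hXpos hτsq]
  -- the core real inequality
  have hcore : Real.exp (-(ellOf Δ * awP Δ i / dW G p u * (dW G p u - p v))) ≤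
      2 * Real.exp (-(ellOf Δ * awP Δ i)) := by
    have hq0 := (hp v).1
    have hq := (hp v).2
    have hfrac : ellOf Δ * awP Δ i * p v / dW G p u ≤ Real.log 2 := by
      calc ellOf Δ * awP Δ i * p v / dW G p u ≤ X * tauOf Δ / Real.sqrt (tauOf Δ) := by
            gcongr <;> first | exact hτsq | exact haiX | exact hu1.le | exact hq | exact hq0 | positivity
      _ = X * Real.sqrt (tauOf Δ) := by rw [mul_div_assoc, Real.div_sqrt]
      _ ≤ Real.log 2 := hXsqτ
    have heq : -(ellOf Δ * awP Δ i / dW G p u * (dW G p u - p v)) =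
        -(ellOf Δ * awP Δ i) + ellOf Δ * awP Δ i * p v / dW G p u := by
      field_simp; ring
    rw [heq, Real.exp_add]
    have h2 : Real.exp (ellOf Δ * awP Δ i * p v / dW G p u) ≤ 2 := by
      calc Real.exp (ellOf Δ * awP Δ i * p v / dW G p u) ≤ Real.exp (Real.log 2) :=
            Real.exp_le_exp.mpr hfrac
      _ = 2 := Real.exp_log two_pos
    nlinarith [Real.exp_pos (-(ellOf Δ * awP Δ i))]
  -- measure part
  unfold rankMeasure
  set μ0 : Measure ℝ := (volume : Measure ℝ).restrict (Set.Icc 0 1) with hμ0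
  haveI : IsProbabilityMeasure μ0 := by
    constructor
    rw [hμ0, Measure.restrict_apply_univ, Real.volume_Icc]
    norm_num
  set S : V → Set ℝ := fun w =>
    (if w = u then Set.Ioc (awP Δ i * p u) (awP Δ (i + 1) * p u) else Set.univ) ∩
    (if G.Adj v w then Set.Ioc (ellOf Δ * (awP Δ i * p w) / dW G p v) 1 else Set.univ) ∩
    (if w = v then Set.Ioc (awP Δ i * p v) (awP Δ (i + 1) * p v) else Set.univ) with hS_def
  set S' : V → Set ℝ := fun w =>
    S w ∩ (if G.Adj u w then Set.Ioc (ellOf Δ * (awP Δ i * p w) / dW G p u) 1 else Set.univ)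
    with hS'_def
  have hB : {r : V → ℝ | r u ∈ Set.Ioc (awP Δ i * p u) (awP Δ (i + 1) * p u) ∧
      CplusMem G Δ p r i v} = Set.univ.pi S := by
    ext r
    simp only [Set.mem_setOf_eq, Set.mem_univ_pi, hS_def, Set.mem_inter_iff, CplusMem]
    constructor
    · rintro ⟨h1, -, -, h3, h4⟩ w
      refine ⟨⟨?_, ?_⟩, ?_⟩
      · split_ifs with h
        · exact h ▸ h1
        · trivial
      · split_ifs with h
        · exact h4 w h
        · trivial
      · split_ifs with h
        · exact h ▸ h3
        · trivial
    · intro h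
      refine ⟨?_, hv1, hv2, ?_, ?_⟩
      · have := (h u).1.1; rwa [if_pos rfl] at this
      · have := (h v).2; rwa [if_pos rfl] at this
      · intro w hw
        have := (h w).1.2; rwa [if_pos hw] at this
  have hAsub : {r : V → ℝ | CMem G Δ p r u ∧
      r u ∈ Set.Ioc (awP Δ i * p u) (awP Δ (i + 1) * p u) ∧ CplusMem G Δ p r i v} ⊆
      Set.univ.pi S' := by
    intro r hr
    obtain ⟨hCu, hIu, hCv⟩ := hr
    have hrB : r ∈ Set.univ.pi S := by
      rw [← hB]; exact ⟨hIu, hCv⟩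
    have hextra : ∀ w, G.Adj u w →
        r w ∈ Set.Ioc (ellOf Δ * (awP Δ i * p w) / dW G p u) 1 := by
      unfold CMem at hCu
      rcases hCu with hm | ⟨j, hj, hCuj⟩
      · exact absurd hm.1 (not_le.mpr hu1)
      · obtain ⟨hj1, hjk⟩ := Finset.mem_Icc.mp hj
        obtain ⟨-, -, hju, hjnb⟩ := hCuj
        have hpu : 0 < p u := by
          rcases lt_or_eq_of_le (hp u).1 with h | h
          · exact h
          · exfalso
            have hcontr := hIu.1.trans_le hIu.2
            rw [← h] at hcontr
            simp at hcontr
        have hmono : StrictMono (aw Δ) := strictMono_nat_of_lt_succ (aw_lt_succ Δ hs)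
        have hji : j = i := by
          by_contra hne
          rcases Nat.lt_or_ge j i with hlt | hge
          · have h1 : awP Δ (j + 1) ≤ awP Δ i := by
              unfold awP
              exact hmono.monotone (by omega)
            have h2 := hju.2
            have h3 := hIu.1
            nlinarith [mul_le_mul_of_nonneg_right h1 hpu.le]
          · have hlt : i < j := lt_of_le_of_ne hge (Ne.symm hne)
            have h1 : awP Δ (i + 1) ≤ awP Δ j := by
              unfold awP
              exact hmono.monotone (by omega)
            nlinarith [mul_le_mul_of_nonneg_right h1 hpu.le, hIu.2, hju.1]
        subst hji
        exact hjnb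
    intro w _
    simp only [hS'_def, Set.mem_inter_iff]
    refine ⟨hrB w (Set.mem_univ w), ?_⟩
    split_ifs with h
    · exact hextra w h
    · trivial
  -- per-coordinate factors
  have hfac : ∀ w ∈ (Finset.univ : Finset V), μ0 (S' w) ≤ μ0 (S w) *
      ENNReal.ofReal (Real.exp (-(if G.Adj u w ∧ w ≠ v then
        ellOf Δ * (awP Δ i * p w) / dW G p u else 0))) := by
    intro w _
    by_cases hw : G.Adj u w ∧ w ≠ v
    · have hwu : w ≠ u := by rintro rfl; exact G.irrefl hw.1
      have hnadj : ¬ G.Adj v w := by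
        intro hadj
        exact htri {u, v, w} (SimpleGraph.is3Clique_triple_iff.mpr ⟨huv, hw.1, hadj⟩)
      have hSw : S w = Set.univ := by
        simp [hS_def, hwu, hnadj, hw.2]
      have hc0 : 0 ≤ ellOf Δ * (awP Δ i * p w) / dW G p u :=
        div_nonneg (mul_nonneg hlpos.le (mul_nonneg hai_pos.le (hp w).1)) hdu.le
      rw [if_pos hw, hSw, measure_univ, one_mul]
      calc μ0 (S' w) ≤ μ0 (Set.Ioc (ellOf Δ * (awP Δ i * p w) / dW G p u) 1) := by
            apply measure_mono
            simp only [hS'_def]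
            rw [if_pos hw.1]
            exact Set.inter_subset_right
      _ ≤ volume (Set.Ioc (ellOf Δ * (awP Δ i * p w) / dW G p u) 1) :=
            Measure.restrict_le_self _
      _ = ENNReal.ofReal (1 - ellOf Δ * (awP Δ i * p w) / dW G p u) := Real.volume_Ioc
      _ ≤ ENNReal.ofReal (Real.exp (-(ellOf Δ * (awP Δ i * p w) / dW G p u))) := by
            apply ENNReal.ofReal_le_ofReal
            linarith [Real.add_one_le_exp (-(ellOf Δ * (awP Δ i * p w) / dW G p u))]
    · rw [if_neg hw]
      simp only [neg_zero, Real.exp_zero, ENNReal.ofReal_one, mul_one]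
      apply measure_mono
      simp only [hS'_def]
      exact Set.inter_subset_left
  -- sum of exponents
  have hsum : (∑ w : V, (if G.Adj u w ∧ w ≠ v then
      ellOf Δ * (awP Δ i * p w) / dW G p u else 0)) =
      ellOf Δ * awP Δ i / dW G p u * (dW G p u - p v) := by
    have hfe : (Finset.univ.filter (fun w => G.Adj u w ∧ w ≠ v)) =
        (G.neighborFinset u).erase v := by
      ext w
      simp [SimpleGraph.mem_neighborFinset, and_comm]
    rw [← Finset.sum_filter, hfe]
    have hcongr : ∀ w ∈ (G.neighborFinset u).erase v,
        ellOf Δ * (awP Δ i * p w) / dW G p u =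
        (ellOf Δ * awP Δ i / dW G p u) * p w := fun w _ => by ring
    rw [Finset.sum_congr rfl hcongr, ← Finset.mul_sum]
    have hvmem : v ∈ G.neighborFinset u := by simpa using huv
    have hsum2 : ∑ w ∈ (G.neighborFinset u).erase v, p w = dW G p u - p v := by
      have h := Finset.sum_erase_add (G.neighborFinset u) p hvmem
      unfold dW
      linarith
    rw [hsum2]
  have hprod : (∏ w : V, ENNReal.ofReal (Real.exp (-(if G.Adj u w ∧ w ≠ v then
      ellOf Δ * (awP Δ i * p w) / dW G p u else 0)))) =
      ENNReal.ofReal (Real.exp (-(ellOf Δ * awP Δ i / dW G p u * (dW G p u - p v)))) := by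
    rw [← ENNReal.ofReal_prod_of_nonneg (fun w _ => (Real.exp_pos _).le)]
    congr 1
    rw [← Real.exp_sum]
    congr 1
    rw [← hsum, Finset.sum_neg_distrib]
  calc Measure.pi (fun _ : V => μ0) {r | CMem G Δ p r u ∧
        r u ∈ Set.Ioc (awP Δ i * p u) (awP Δ (i + 1) * p u) ∧ CplusMem G Δ p r i v}
      ≤ Measure.pi (fun _ : V => μ0) (Set.univ.pi S') := measure_mono hAsub
  _ = ∏ w : V, μ0 (S' w) := Measure.pi_pi _ _
  _ ≤ ∏ w : V, (μ0 (S w) * ENNReal.ofReal (Real.exp (-(if G.Adj u w ∧ w ≠ v then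
        ellOf Δ * (awP Δ i * p w) / dW G p u else 0)))) := Finset.prod_le_prod' hfac
  _ = (∏ w : V, μ0 (S w)) * ∏ w : V, ENNReal.ofReal (Real.exp (-(if G.Adj u w ∧ w ≠ v then
        ellOf Δ * (awP Δ i * p w) / dW G p u else 0))) := Finset.prod_mul_distrib
  _ = (∏ w : V, μ0 (S w)) *
        ENNReal.ofReal (Real.exp (-(ellOf Δ * awP Δ i / dW G p u * (dW G p u - p v)))) := by
      rw [hprod]
  _ ≤ (∏ w : V, μ0 (S w)) * ENNReal.ofReal (2 * Real.exp (-(ellOf Δ * awP Δ i))) :=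
      mul_le_mul_right (ENNReal.ofReal_le_ofReal hcore) _
  _ = ENNReal.ofReal (2 * Real.exp (-(ellOf Δ * awP Δ i))) *
        Measure.pi (fun _ : V => μ0) {r | r u ∈ Set.Ioc (awP Δ i * p u)
          (awP Δ (i + 1) * p u) ∧ CplusMem G Δ p r i v} := by
      rw [hB, Measure.pi_pi, mul_comm]
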